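/- Let A, B, C, D, E, F, G, H be positive real numbers. Then the infimum over (β₁, β₂) ∈ [0, ∞)² of (Aβ₁β₂ + Bβ₁ + Cβ₂ + D)/(Eβ₁β₂ + Fβ₁ + Gβ₂ + H) equals min{A/E, B/F, C/G, D/H}. Hence the optimal choice of (β₁, β₂) for this objective is one of the four corner policies (∞, ∞), (∞, 0), (0, ∞), (0, 0), selected according to which of A/E, B/F, C/G, D/H is smallest. -/

import Mathlib

open Filter Topology

private lemma lin_tendsto (b d f h : ℝ) (hf : 0 < f) (hh : 0 < h) :
    Tendsto (fun t : ℝ => (b * t + d) / (f * t + h)) atTop (nhds (b / f)) := by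
  have hz := (tendsto_inv_atTop_zero : Tendsto (fun t : ℝ => t⁻¹) atTop (nhds 0))
  have hb : Tendsto (fun t : ℝ => b + d * t⁻¹) atTop (nhds b) := by
    simpa using tendsto_const_nhds.add (hz.const_mul d)
  have hfd : Tendsto (fun t : ℝ => f + h * t⁻¹) atTop (nhds f) := by
    simpa using tendsto_const_nhds.add (hz.const_mul h)
  have h1 := hb.div hfd hf.ne'
  refine h1.congr' ?_
  filter_upwards [eventually_gt_atTop (0 : ℝ)] with t ht
  have h2 : f * t + h ≠ 0 := by positivity
  have h3 : t ≠ 0 := ht.ne'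
  simp only [Pi.div_apply]
  field_simp

private lemma quad_tendsto (a b d e f h : ℝ) (he : 0 < e) (hf : 0 < f) (hh : 0 < h) :
    Tendsto (fun t : ℝ => (a * t * t + b * t + d) / (e * t * t + f * t + h)) atTop
      (nhds (a / e)) := by
  have hz := (tendsto_inv_atTop_zero : Tendsto (fun t : ℝ => t⁻¹) atTop (nhds 0))
  have hb : Tendsto (fun t : ℝ => a + b * t⁻¹ + d * (t⁻¹ * t⁻¹)) atTop (nhds a) := by
    have h0 : Tendsto (fun t : ℝ => a + b * t⁻¹ + d * (t⁻¹ * t⁻¹)) atTop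
        (nhds (a + b * 0 + d * (0 * 0))) :=
      (tendsto_const_nhds.add (hz.const_mul b)).add ((hz.mul hz).const_mul d)
    simpa using h0
  have hfd : Tendsto (fun t : ℝ => e + f * t⁻¹ + h * (t⁻¹ * t⁻¹)) atTop (nhds e) := by
    have h0 : Tendsto (fun t : ℝ => e + f * t⁻¹ + h * (t⁻¹ * t⁻¹)) atTop
        (nhds (e + f * 0 + h * (0 * 0))) :=
      (tendsto_const_nhds.add (hz.const_mul f)).add ((hz.mul hz).const_mul h)
    simpa using h0
  have h1 := hb.div hfd he.ne'
  refine h1.congr' ?_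
  filter_upwards [eventually_gt_atTop (0 : ℝ)] with t ht
  have h2 : e * t * t + f * t + h ≠ 0 := by positivity
  have h3 : t ≠ 0 := ht.ne'
  simp only [Pi.div_apply]
  field_simp

/-- For positive reals `A,…,H`, the infimum over `(β₁, β₂) ∈ [0, ∞)²` of
`(Aβ₁β₂ + Bβ₁ + Cβ₂ + D)/(Eβ₁β₂ + Fβ₁ + Gβ₂ + H)` equals `min{A/E, B/F, C/G, D/H}`,
the four values of the objective at (or in the limit toward) the four corner policies
`(∞,∞)`, `(∞,0)`, `(0,∞)`, `(0,0)` of the control quadrant. -/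
theorem bilinear_fractional_inf_eq_corner_min
    (A B C D E F G H : ℝ)
    (hA : 0 < A) (hB : 0 < B) (hC : 0 < C) (hD : 0 < D)
    (hE : 0 < E) (hF : 0 < F) (hG : 0 < G) (hH : 0 < H) :
    sInf ((fun p : ℝ × ℝ =>
        (A * p.1 * p.2 + B * p.1 + C * p.2 + D) /
          (E * p.1 * p.2 + F * p.1 + G * p.2 + H)) ''
        (Set.Ici (0 : ℝ) ×ˢ Set.Ici (0 : ℝ)))
      = min (min (A / E) (B / F)) (min (C / G) (D / H)) := by
  set m := min (min (A / E) (B / F)) (min (C / G) (D / H)) with hm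
  set S := ((fun p : ℝ × ℝ =>
        (A * p.1 * p.2 + B * p.1 + C * p.2 + D) /
          (E * p.1 * p.2 + F * p.1 + G * p.2 + H)) ''
        (Set.Ici (0 : ℝ) ×ˢ Set.Ici (0 : ℝ))) with hS
  have h1 : m * E ≤ A := (le_div_iff₀ hE).mp ((min_le_left _ _).trans (min_le_left _ _))
  have h2 : m * F ≤ B := (le_div_iff₀ hF).mp ((min_le_left _ _).trans (min_le_right _ _))
  have h3 : m * G ≤ C := (le_div_iff₀ hG).mp ((min_le_right _ _).trans (min_le_left _ _))
  have h4 : m * H ≤ D := (le_div_iff₀ hH).mp ((min_le_right _ _).trans (min_le_right _ _))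
  have lb : ∀ x ∈ S, m ≤ x := by
    rintro x ⟨⟨p1, p2⟩, ⟨hp1, hp2⟩, rfl⟩
    simp only [Set.mem_Ici] at hp1 hp2
    have hden : 0 < E * p1 * p2 + F * p1 + G * p2 + H := by positivity
    rw [le_div_iff₀ hden]
    nlinarith [mul_le_mul_of_nonneg_right h1 (mul_nonneg hp1 hp2),
      mul_le_mul_of_nonneg_right h2 hp1, mul_le_mul_of_nonneg_right h3 hp2]
  have hbdd : BddBelow S := ⟨m, lb⟩
  have hmem : ∀ p1 p2 : ℝ, 0 ≤ p1 → 0 ≤ p2 →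
      (A * p1 * p2 + B * p1 + C * p2 + D) / (E * p1 * p2 + F * p1 + G * p2 + H) ∈ S := by
    intro p1 p2 hp1 hp2
    exact ⟨(p1, p2), ⟨hp1, hp2⟩, rfl⟩
  have hne : S.Nonempty := ⟨_, hmem 0 0 le_rfl le_rfl⟩
  refine le_antisymm ?_ (le_csInf hne lb)
  refine le_min (le_min ?_ ?_) (le_min ?_ ?_)
  · -- A/E via (t, t)
    refine ge_of_tendsto (quad_tendsto A (B + C) D E (F + G) H hE (by linarith) hH) ?_
    filter_upwards [eventually_ge_atTop (0 : ℝ)] with t ht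
    have := csInf_le hbdd (hmem t t ht ht)
    calc sInf S ≤ _ := this
      _ = (A * t * t + (B + C) * t + D) / (E * t * t + (F + G) * t + H) := by ring_nf
  · -- B/F via (t, 0)
    refine ge_of_tendsto (lin_tendsto B D F H hF hH) ?_
    filter_upwards [eventually_ge_atTop (0 : ℝ)] with t ht
    have := csInf_le hbdd (hmem t 0 ht le_rfl)
    calc sInf S ≤ _ := this
      _ = (B * t + D) / (F * t + H) := by ring_nf
  · -- C/G via (0, t)
    refine ge_of_tendsto (lin_tendsto C D G H hG hH) ?_
    filter_upwards [eventually_ge_atTop (0 : ℝ)] with t ht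
    have := csInf_le hbdd (hmem 0 t le_rfl ht)
    calc sInf S ≤ _ := this
      _ = (C * t + D) / (G * t + H) := by ring_nf
  · -- D/H at (0, 0)
    have := csInf_le hbdd (hmem 0 0 le_rfl le_rfl)
    calc sInf S ≤ _ := this
      _ = D / H := by ring_nf
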